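/- arXiv:2208.14373 — 2 statements merged into one kernel-verified Lean document; each statement's English description precedes it below -/
import Mathlib

section
/- Conservation of momentum under the Hermite-basis change-of-parameters map (Proposition, part (ii)): Let N ∈ ℕ with N ≥ 1, let α', α > 0 and u', u ∈ ℝ, and let c_0, …, c_N be real numbers. Define f(v) := Σ_{m=0}^N c_m·ψ_m^{α',u'}(v) and g(v) := Σ_{n=0}^N (Σ_{m=0}^N ℙ_{n,m}·c_m)·ψ_n^{α,u}(v). Then ∫_ℝ v·g(v) dv = ∫_ℝ v·f(v) dv. -/
open MeasureTheory Real Finset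

/-- Physicists' Hermite polynomials: `H 0 x = 1`, `H 1 x = 2x`,
`H (n+1) x = 2x · H n x − 2n · H (n−1) x`. -/
noncomputable def physHermite : ℕ → ℝ → ℝ
  | 0 => fun _ => 1
  | 1 => fun x => 2 * x
  | (n + 2) => fun x => 2 * x * physHermite (n + 1) x - 2 * ((n : ℝ) + 1) * physHermite n x

/-- Asymmetrically weighted Hermite function
`ψ_n^{α,u}(v) = (π·2^n·n!)^{-1/2} · H_n((v−u)/α) · exp(−((v−u)/α)²)`. -/
noncomputable def awHermite (α u : ℝ) (n : ℕ) (v : ℝ) : ℝ :=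
  (Real.sqrt (Real.pi * 2 ^ n * (n.factorial : ℝ)))⁻¹ * physHermite n ((v - u) / α) *
    Real.exp (-((v - u) / α) ^ 2)

/-- The weight `ω(v) = √π · α⁻¹ · exp(((v−u)/α)²)`. -/
noncomputable def hermiteWeight (α u : ℝ) (v : ℝ) : ℝ :=
  Real.sqrt Real.pi * α⁻¹ * Real.exp (((v - u) / α) ^ 2)

/-- Transformation matrix entries `ℙ_{n,m} = ∫ ψ_m^{α',u'}(v) · ψ_n^{α,u}(v) · ω(v) dv`. -/
noncomputable def transferMatrix (α' u' α u : ℝ) (n m : ℕ) : ℝ :=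
  ∫ v : ℝ, awHermite α' u' m v * awHermite α u n v * hermiteWeight α u v

/-!
The first moments `∫ v ψ_n^{α,u}(v) dv` are `uα`, `α²/√2`, `0`, `0`, …: for
`h_n(x) = H_n(x) e^{-x²}` one has `h_n' = -h_{n+1}`, so `∫ h_{n+1} = 0` and, integrating by parts,
`∫ x h_{n+1} = ∫ h_n`. As `ψ_0 ω = α⁻¹` and `ψ_1 ω = √2 (v - u) / α²`, this gives the expansion
`v = Σ_n (∫ w ψ_n^{α,u}(w) dw) ψ_n^{α,u}(v) ω(v)`. Pairing it with `ψ_m^{α',u'}` shows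
`Σ_n ℙ_{n,m} ∫ w ψ_n^{α,u} = ∫ v ψ_m^{α',u'}`, and the theorem follows by linearity in `c`.
-/

open Polynomial

theorem physHermite_succ (n : ℕ) (x : ℝ) :
    physHermite (n + 1) x = 2 * x * physHermite n x - 2 * n * physHermite (n - 1) x := by
  cases n with
  | zero => simp [physHermite]
  | succ n => simp [physHermite]

theorem hasDerivAt_physHermite :
    ∀ (n : ℕ) (x : ℝ), HasDerivAt (physHermite n) (2 * n * physHermite (n - 1) x) x
  | 0, x => by simpa [physHermite] using hasDerivAt_const x (1 : ℝ)
  | 1, x => by simpa [physHermite] using (hasDerivAt_id x).const_mul (2 : ℝ)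
  | n + 2, x => by
    have h : HasDerivAt (physHermite (n + 2)) _ x :=
      (((hasDerivAt_id' x).const_mul 2).mul (hasDerivAt_physHermite (n + 1) x)).sub
        ((hasDerivAt_physHermite n x).const_mul (2 * ((n : ℝ) + 1)))
    refine h.congr_deriv ?_
    rw [show n + 2 - 1 = n + 1 from rfl, show n + 1 - 1 = n from rfl, physHermite_succ n x]
    push_cast
    ring

theorem exists_physHermite_eq_eval : ∀ n : ℕ, ∃ p : ℝ[X], ∀ x, physHermite n x = p.eval x
  | 0 => ⟨1, by simp [physHermite]⟩
  | 1 => ⟨2 * X, by simp [physHermite]⟩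
  | n + 2 => by
    obtain ⟨p, hp⟩ := exists_physHermite_eq_eval n
    obtain ⟨q, hq⟩ := exists_physHermite_eq_eval (n + 1)
    exact ⟨2 * X * q - C (2 * ((n : ℝ) + 1)) * p, fun x => by simp [physHermite, hp, hq]⟩

noncomputable def physHermiteGaussian (n : ℕ) (x : ℝ) : ℝ :=
  physHermite n x * exp (-x ^ 2)

theorem hasDerivAt_physHermiteGaussian (n : ℕ) (x : ℝ) :
    HasDerivAt (physHermiteGaussian n) (-physHermiteGaussian (n + 1) x) x := by
  have h : HasDerivAt (physHermiteGaussian n) _ x :=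
    (hasDerivAt_physHermite n x).mul ((hasDerivAt_pow 2 x).neg.exp)
  refine h.congr_deriv ?_
  simp only [physHermiteGaussian, physHermite_succ, Pi.neg_apply]
  push_cast
  ring

theorem integrable_eval_mul_exp_neg_sq (p : ℝ[X]) :
    Integrable fun x : ℝ => p.eval x * exp (-x ^ 2) := by
  induction p using Polynomial.induction_on' with
  | add p q hp hq => simp only [eval_add, add_mul]; exact hp.add hq
  | monomial n a =>
    have h := integrable_rpow_mul_exp_neg_mul_sq one_pos
      (neg_one_lt_zero.trans_le (Nat.cast_nonneg n))
    simpa [mul_assoc] using h.const_mul a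

theorem integrable_eval_mul_physHermiteGaussian (p : ℝ[X]) (n : ℕ) :
    Integrable fun x => p.eval x * physHermiteGaussian n x := by
  obtain ⟨q, hq⟩ := exists_physHermite_eq_eval n
  simpa [physHermiteGaussian, hq, mul_assoc] using integrable_eval_mul_exp_neg_sq (p * q)

theorem integrable_physHermiteGaussian (n : ℕ) : Integrable (physHermiteGaussian n) := by
  simpa using integrable_eval_mul_physHermiteGaussian 1 n

theorem integrable_mul_physHermiteGaussian (n : ℕ) :
    Integrable fun x => x * physHermiteGaussian n x := by
  simpa using integrable_eval_mul_physHermiteGaussian X n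

theorem integral_physHermiteGaussian_zero : ∫ x, physHermiteGaussian 0 x = √π := by
  simpa [physHermiteGaussian, physHermite] using integral_gaussian 1

theorem integral_physHermiteGaussian_succ (n : ℕ) : ∫ x, physHermiteGaussian (n + 1) x = 0 := by
  have h := integral_eq_zero_of_hasDerivAt_of_integrable (hasDerivAt_physHermiteGaussian n)
    (integrable_physHermiteGaussian (n + 1)).neg (integrable_physHermiteGaussian n)
  simpa [integral_neg] using h

theorem integral_mul_physHermiteGaussian_succ (n : ℕ) :
    ∫ x, x * physHermiteGaussian (n + 1) x = ∫ x, physHermiteGaussian n x := by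
  have hderiv : ∀ x, HasDerivAt (fun x => x * physHermiteGaussian n x)
      (physHermiteGaussian n x - x * physHermiteGaussian (n + 1) x) x := fun x =>
    ((hasDerivAt_id' x).mul (hasDerivAt_physHermiteGaussian n x)).congr_deriv (by ring)
  have h := integral_eq_zero_of_hasDerivAt_of_integrable hderiv
    ((integrable_physHermiteGaussian n).sub (integrable_mul_physHermiteGaussian (n + 1)))
    (integrable_mul_physHermiteGaussian n)
  rw [integral_sub (integrable_physHermiteGaussian n)
    (integrable_mul_physHermiteGaussian (n + 1))] at h
  linarith

theorem integral_mul_physHermiteGaussian_zero : ∫ x, x * physHermiteGaussian 0 x = 0 := by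
  have h : ∀ x, x * physHermiteGaussian 0 x = 2⁻¹ * physHermiteGaussian 1 x := fun x => by
    simp only [physHermiteGaussian, physHermite]; ring
  simp_rw [h, integral_const_mul, integral_physHermiteGaussian_succ, mul_zero]

theorem integral_comp_sub_div {E : Type*} [NormedAddCommGroup E] [NormedSpace ℝ E]
    (f : ℝ → E) (α u : ℝ) : ∫ v, f ((v - u) / α) = |α| • ∫ x, f x := by
  rw [integral_sub_right_eq_self (fun v => f (v / α)) u, Measure.integral_comp_div]

section awHermite

variable {α u : ℝ}

theorem awHermite_eq_physHermiteGaussian (α u : ℝ) (n : ℕ) (v : ℝ) :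
    awHermite α u n v = (√(π * 2 ^ n * n.factorial))⁻¹ * physHermiteGaussian n ((v - u) / α) := by
  rw [awHermite, physHermiteGaussian, mul_assoc]

theorem integrable_eval_mul_awHermite (hα : α ≠ 0) (p : ℝ[X]) (n : ℕ) :
    Integrable fun v => p.eval v * awHermite α u n v := by
  have h := ((integrable_eval_mul_physHermiteGaussian (p.comp (C α * X + C u)) n).comp_div hα
    |>.comp_sub_right u).const_mul (√(π * 2 ^ n * n.factorial))⁻¹
  refine h.congr (.of_forall fun v => ?_)
  simp only [eval_comp, eval_add, eval_mul, eval_C, eval_X, awHermite_eq_physHermiteGaussian]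
  rw [mul_div_cancel₀ _ hα, sub_add_cancel]
  ring

theorem integral_mul_awHermite (hα : 0 < α) (n : ℕ) :
    ∫ v, v * awHermite α u n v = (√(π * 2 ^ n * n.factorial))⁻¹ * α *
      (α * (∫ x, x * physHermiteGaussian n x) + u * ∫ x, physHermiteGaussian n x) := by
  have h : ∀ v, v * awHermite α u n v = (√(π * 2 ^ n * n.factorial))⁻¹ *
      (fun x => (α * x + u) * physHermiteGaussian n x) ((v - u) / α) := fun v => by
    dsimp only
    rw [awHermite_eq_physHermiteGaussian, mul_div_cancel₀ _ hα.ne', sub_add_cancel]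
    ring
  rw [integral_congr_ae (.of_forall h), integral_const_mul,
    integral_comp_sub_div fun x => (α * x + u) * physHermiteGaussian n x,
    abs_of_pos hα, smul_eq_mul]
  simp only [add_mul, mul_assoc]
  rw [integral_add ((integrable_mul_physHermiteGaussian n).const_mul α)
    ((integrable_physHermiteGaussian n).const_mul u), integral_const_mul, integral_const_mul]

theorem integral_mul_awHermite_zero (hα : 0 < α) : ∫ v, v * awHermite α u 0 v = u * α := by
  rw [integral_mul_awHermite hα, integral_mul_physHermiteGaussian_zero,
    integral_physHermiteGaussian_zero]
  simp only [pow_zero, mul_one, Nat.factorial_zero, Nat.cast_one, mul_zero, zero_add]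
  field_simp

theorem integral_mul_awHermite_one (hα : 0 < α) : ∫ v, v * awHermite α u 1 v = α ^ 2 / √2 := by
  rw [integral_mul_awHermite hα, integral_mul_physHermiteGaussian_succ,
    integral_physHermiteGaussian_zero, integral_physHermiteGaussian_succ]
  simp only [pow_one, Nat.factorial_one, Nat.cast_one, mul_one, sqrt_mul pi_pos.le, mul_inv_rev,
    mul_zero, add_zero]
  field_simp

theorem integral_mul_awHermite_add_two (hα : 0 < α) (n : ℕ) :
    ∫ v, v * awHermite α u (n + 2) v = 0 := by
  rw [integral_mul_awHermite hα, integral_mul_physHermiteGaussian_succ,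
    integral_physHermiteGaussian_succ, integral_physHermiteGaussian_succ]
  ring

theorem awHermite_mul_hermiteWeight (α u : ℝ) (n : ℕ) (v : ℝ) :
    awHermite α u n v * hermiteWeight α u v =
      (√(π * 2 ^ n * n.factorial))⁻¹ * √π * α⁻¹ * physHermite n ((v - u) / α) := by
  have h : exp (-((v - u) / α) ^ 2) * exp (((v - u) / α) ^ 2) = 1 := by
    rw [← exp_add, neg_add_cancel, exp_zero]
  rw [awHermite, hermiteWeight]
  linear_combination
    ((√(π * 2 ^ n * n.factorial))⁻¹ * √π * α⁻¹ * physHermite n ((v - u) / α)) * h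

theorem exists_awHermite_mul_hermiteWeight_eq_eval (α u : ℝ) (n : ℕ) :
    ∃ p : ℝ[X], ∀ v, awHermite α u n v * hermiteWeight α u v = p.eval v := by
  obtain ⟨q, hq⟩ := exists_physHermite_eq_eval n
  refine ⟨C ((√(π * 2 ^ n * n.factorial))⁻¹ * √π * α⁻¹) * q.comp (C α⁻¹ * (X - C u)),
    fun v => ?_⟩
  simp [awHermite_mul_hermiteWeight, hq, div_eq_inv_mul]

theorem sum_integral_mul_awHermite_mul_hermiteWeight (hα : 0 < α) {N : ℕ} (hN : 1 ≤ N)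
    (v : ℝ) :
    ∑ n ∈ range (N + 1), (∫ w, w * awHermite α u n w) * (awHermite α u n v * hermiteWeight α u v)
      = v := by
  rw [← sum_subset (range_subset_range.mpr (by omega : 2 ≤ N + 1)) fun n _ hn => ?_]
  · rw [sum_range_succ, sum_range_one, integral_mul_awHermite_zero hα,
      integral_mul_awHermite_one hα, awHermite_mul_hermiteWeight, awHermite_mul_hermiteWeight]
    simp only [pow_zero, mul_one, Nat.factorial_zero, Nat.cast_one, physHermite, pow_one,
      Nat.factorial_one, sqrt_mul pi_pos.le, mul_inv_rev]
    field_simp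
    rw [sq_sqrt zero_le_two]
    ring
  · obtain ⟨k, rfl⟩ : ∃ k, n = k + 2 := ⟨n - 2, by simp at hn; omega⟩
    rw [integral_mul_awHermite_add_two hα, zero_mul]

theorem integral_mul_sum_awHermite (hα : α ≠ 0) (s : Finset ℕ) (d : ℕ → ℝ) :
    ∫ v, v * ∑ n ∈ s, d n * awHermite α u n v = ∑ n ∈ s, d n * ∫ v, v * awHermite α u n v := by
  simp_rw [mul_sum, mul_left_comm _ (d _)]
  rw [integral_finsetSum _ fun n _ => ?_]
  · simp_rw [integral_const_mul]
  · simpa using (integrable_eval_mul_awHermite hα X n).const_mul (d n)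

end awHermite

theorem sum_transferMatrix_mul_integral_mul_awHermite {α' α u' u : ℝ} (hα' : α' ≠ 0)
    (hα : 0 < α) {N : ℕ} (hN : 1 ≤ N) (m : ℕ) :
    ∑ n ∈ range (N + 1), transferMatrix α' u' α u n m * ∫ w, w * awHermite α u n w
      = ∫ v, v * awHermite α' u' m v := by
  have hint (n : ℕ) : Integrable fun v => awHermite α' u' m v *
      ((∫ w, w * awHermite α u n w) * (awHermite α u n v * hermiteWeight α u v)) := by
    obtain ⟨p, hp⟩ := exists_awHermite_mul_hermiteWeight_eq_eval α u n
    simp only [hp]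
    exact ((integrable_eval_mul_awHermite hα' p m).const_mul _).congr
      (.of_forall fun v => by ring)
  calc ∑ n ∈ range (N + 1), transferMatrix α' u' α u n m * ∫ w, w * awHermite α u n w
      = ∫ v, awHermite α' u' m v * ∑ n ∈ range (N + 1),
          (∫ w, w * awHermite α u n w) * (awHermite α u n v * hermiteWeight α u v) := by
        simp_rw [mul_sum]
        rw [integral_finsetSum _ fun n _ => hint n]
        refine sum_congr rfl fun n _ => ?_
        rw [transferMatrix, ← integral_mul_const]
        congr 1 with v
        ring
    _ = ∫ v, v * awHermite α' u' m v := by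
        simp_rw [sum_integral_mul_awHermite_mul_hermiteWeight hα hN, mul_comm]

/-- Conservation of momentum under the Hermite-basis change-of-parameters map. -/
theorem momentum_conservation_change_of_basis (N : ℕ) (hN : 1 ≤ N) (α' α u' u : ℝ)
    (hα' : 0 < α') (hα : 0 < α) (c : ℕ → ℝ) :
    (∫ v : ℝ, v * ∑ n ∈ Finset.range (N + 1),
        (∑ m ∈ Finset.range (N + 1), transferMatrix α' u' α u n m * c m) * awHermite α u n v)
      = ∫ v : ℝ, v * ∑ m ∈ Finset.range (N + 1), c m * awHermite α' u' m v := by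
  rw [integral_mul_sum_awHermite hα.ne', integral_mul_sum_awHermite hα'.ne']
  calc ∑ n ∈ range (N + 1), (∑ m ∈ range (N + 1), transferMatrix α' u' α u n m * c m) *
        ∫ v, v * awHermite α u n v
      = ∑ m ∈ range (N + 1), c m *
          ∑ n ∈ range (N + 1), transferMatrix α' u' α u n m * ∫ v, v * awHermite α u n v := by
        simp_rw [sum_mul, mul_sum]
        rw [sum_comm]
        simp_rw [mul_assoc, mul_left_comm]
    _ = ∑ m ∈ range (N + 1), c m * ∫ v, v * awHermite α' u' m v := by
        simp_rw [sum_transferMatrix_mul_integral_mul_awHermite hα'.ne' hα hN]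
end

section
/- Explicit formula for the transformation matrix, pure shift case: Let α', α > 0 and u', u ∈ ℝ with α = α' and u ≠ u', and set b := (u−u')/α', K_{n,m} := 2^{(m−n)/2}·(m!)^{−1/2}·(n!)^{1/2}. Then for all n, m ∈ ℕ with n ≥ m, ℙ_{n,m} = K_{n,m}·(−2b)^{n−m}/(n−m)!. -/
open MeasureTheory Real Finset

/-- The coefficient `K_{n,m} = 2^{(m−n)/2} · (m!)^{−1/2} · (n!)^{1/2}`. -/
noncomputable def Kcoef (n m : ℕ) : ℝ :=
  (2 : ℝ) ^ (((m : ℝ) - (n : ℝ)) / 2) * (Real.sqrt (m.factorial : ℝ))⁻¹ *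
    Real.sqrt (n.factorial : ℝ)

/-!
After the substitution `y = (v - u') / α` the entry `ℙ_{n,m}` is a normalising constant times
`∫ H_m(y) H_n(y - b) e^{-y²} dy`. Integration by parts gives `∫ (2y p - p') e^{-y²} = 0` for
every polynomial `p`, and with the recurrence `H_{k+1} = 2X H_k - H_k'` this moves one Hermite
factor at a time onto the other polynomial: `∫ H_m q e^{-y²} = ∫ q^{(m)} e^{-y²}`. Since
`H_n^{(m)} = 2^m n!/(n-m)! · H_{n-m}`, what remains is `∫ H_k(y - b) e^{-y²} dy = √π (-2b)^k`,
which follows from the same integration by parts, now with `2(y - b) = 2y - 2b`.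
-/

open Polynomial

noncomputable def physHermitePoly : ℕ → ℝ[X]
  | 0 => 1
  | n + 1 => C 2 * X * physHermitePoly n - derivative (physHermitePoly n)

theorem physHermitePoly_succ (n : ℕ) :
    physHermitePoly (n + 1) = C 2 * X * physHermitePoly n - derivative (physHermitePoly n) :=
  rfl

theorem derivative_physHermitePoly_succ (n : ℕ) :
    derivative (physHermitePoly (n + 1)) = C (2 * (n + 1 : ℝ)) * physHermitePoly n := by
  induction n with
  | zero => simp [physHermitePoly]
  | succ n ih =>
    rw [physHermitePoly_succ (n + 1)]
    simp only [derivative_sub, derivative_mul, derivative_C, derivative_X, ih]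
    rw [physHermitePoly_succ n]
    simp only [map_mul, map_add, map_natCast, map_one, map_ofNat]
    push_cast
    ring

theorem derivative_physHermitePoly (n : ℕ) :
    derivative (physHermitePoly n) = C (2 * n : ℝ) * physHermitePoly (n - 1) := by
  cases n with
  | zero => simp [physHermitePoly]
  | succ n => simpa using derivative_physHermitePoly_succ n

theorem physHermitePoly_succ_succ (n : ℕ) :
    physHermitePoly (n + 2) =
      C 2 * X * physHermitePoly (n + 1) - C (2 * (n + 1 : ℝ)) * physHermitePoly n := by
  rw [physHermitePoly_succ (n + 1), derivative_physHermitePoly_succ]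

theorem eval_physHermitePoly : ∀ (n : ℕ) (x : ℝ), (physHermitePoly n).eval x = physHermite n x
  | 0, x => by simp [physHermitePoly, physHermite]
  | 1, x => by simp [physHermitePoly, physHermite]
  | n + 2, x => by
    simp [physHermitePoly_succ_succ, physHermite, eval_physHermitePoly (n + 1),
      eval_physHermitePoly n]

theorem iterate_derivative_physHermitePoly (k n : ℕ) :
    derivative^[k] (physHermitePoly n) =
      C (2 ^ k * n.descFactorial k : ℝ) * physHermitePoly (n - k) := by
  induction k with
  | zero => simp
  | succ k ih =>
    rw [Function.iterate_succ_apply', ih, derivative_C_mul, derivative_physHermitePoly,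
      Nat.descFactorial_succ, Nat.sub_sub, ← mul_assoc, ← C_mul]
    congr 2
    push_cast
    ring

theorem iterate_derivative_comp_X_sub_C {R : Type*} [CommRing R] (p : R[X]) (b : R) (k : ℕ) :
    derivative^[k] (p.comp (X - C b)) = (derivative^[k] p).comp (X - C b) := by
  induction k with
  | zero => rfl
  | succ k ih => simp [Function.iterate_succ_apply', ih, derivative_comp]

noncomputable def gaussianIntegral : ℝ[X] →ₗ[ℝ] ℝ where
  toFun p := ∫ x, p.eval x * exp (-x ^ 2)
  map_add' p q := by
    simp only [eval_add, add_mul]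
    exact integral_add (integrable_eval_mul_exp_neg_sq p) (integrable_eval_mul_exp_neg_sq q)
  map_smul' c p := by
    simp only [eval_smul, smul_eq_mul, RingHom.id_apply, mul_assoc]
    exact integral_const_mul c _

theorem gaussianIntegral_apply (p : ℝ[X]) :
    gaussianIntegral p = ∫ x, p.eval x * exp (-x ^ 2) :=
  rfl

theorem gaussianIntegral_one : gaussianIntegral 1 = √π := by
  simpa [gaussianIntegral_apply] using integral_gaussian 1

theorem gaussianIntegral_derivative (p : ℝ[X]) :
    gaussianIntegral (derivative p) = gaussianIntegral (C 2 * X * p) := by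
  have hderiv (x : ℝ) : HasDerivAt (fun x => p.eval x * exp (-x ^ 2))
      ((derivative p - C 2 * X * p).eval x * exp (-x ^ 2)) x := by
    have hexp : HasDerivAt (fun x : ℝ => exp (-x ^ 2)) (exp (-x ^ 2) * -(2 * x)) x := by
      simpa using ((hasDerivAt_pow 2 x).neg).exp
    refine ((p.hasDerivAt x).fun_mul hexp).congr_deriv ?_
    simp only [eval_sub, eval_mul, eval_C, eval_X]
    ring
  have := integral_eq_zero_of_hasDerivAt_of_integrable hderiv
    (integrable_eval_mul_exp_neg_sq _) (integrable_eval_mul_exp_neg_sq p)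
  rw [← gaussianIntegral_apply, map_sub] at this
  exact sub_eq_zero.mp this

theorem gaussianIntegral_physHermitePoly_succ_mul (m : ℕ) (q : ℝ[X]) :
    gaussianIntegral (physHermitePoly (m + 1) * q) =
      gaussianIntegral (physHermitePoly m * derivative q) := by
  have h := gaussianIntegral_derivative (physHermitePoly m * q)
  rw [physHermitePoly_succ, sub_mul, map_sub, mul_assoc, ← h, derivative_mul, map_add]
  ring

theorem gaussianIntegral_physHermitePoly_mul (m : ℕ) (q : ℝ[X]) :
    gaussianIntegral (physHermitePoly m * q) = gaussianIntegral (derivative^[m] q) := by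
  induction m generalizing q with
  | zero => simp [physHermitePoly]
  | succ m ih =>
    rw [gaussianIntegral_physHermitePoly_succ_mul, ih, Function.iterate_succ_apply]

theorem gaussianIntegral_physHermitePoly_comp (k : ℕ) (b : ℝ) :
    gaussianIntegral ((physHermitePoly k).comp (X - C b)) = √π * (-(2 * b)) ^ k := by
  induction k with
  | zero => simp [physHermitePoly, gaussianIntegral_one]
  | succ k ih =>
    set P := (physHermitePoly k).comp (X - C b)
    have hcomp : (physHermitePoly (k + 1)).comp (X - C b) =
        C 2 * X * P - derivative P - C (2 * b) * P := by
      simp only [P, physHermitePoly_succ, sub_comp, mul_comp, C_comp, X_comp, derivative_comp,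
        derivative_sub, derivative_X, derivative_C, sub_zero, one_mul, map_mul]
      ring
    rw [hcomp, map_sub, map_sub, gaussianIntegral_derivative, sub_self, zero_sub, C_mul',
      map_smul, ih]
    simp only [smul_eq_mul]
    ring

theorem gaussianIntegral_physHermitePoly_mul_comp (m n : ℕ) (b : ℝ) :
    gaussianIntegral (physHermitePoly m * (physHermitePoly n).comp (X - C b)) =
      2 ^ m * n.descFactorial m * (√π * (-(2 * b)) ^ (n - m)) := by
  rw [gaussianIntegral_physHermitePoly_mul, iterate_derivative_comp_X_sub_C,
    iterate_derivative_physHermitePoly, mul_comp, C_comp, C_mul', map_smul,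
    gaussianIntegral_physHermitePoly_comp, smul_eq_mul]

theorem transferMatrix_eq_gaussianIntegral (α u' u : ℝ) (hα : 0 < α) (n m : ℕ) :
    transferMatrix α u' α u n m =
      (√(π * 2 ^ m * m.factorial))⁻¹ * (√(π * 2 ^ n * n.factorial))⁻¹ * √π *
        gaussianIntegral
          (physHermitePoly m * (physHermitePoly n).comp (X - C ((u - u') / α))) := by
  set N := (√(π * 2 ^ m * m.factorial))⁻¹ * (√(π * 2 ^ n * n.factorial))⁻¹ * √π
  set f : ℝ → ℝ := fun y =>
    (physHermitePoly m * (physHermitePoly n).comp (X - C ((u - u') / α))).eval y * exp (-y ^ 2)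
  have hintegrand (v : ℝ) : awHermite α u' m v * awHermite α u n v * hermiteWeight α u v =
      N * α⁻¹ * f ((v - u') / α) := by
    have hshift : (v - u) / α = (v - u') / α - (u - u') / α := by field_simp; ring
    simp only [awHermite, hermiteWeight, f, N, eval_mul, eval_comp, eval_sub, eval_X, eval_C,
      eval_physHermitePoly, ← hshift, exp_neg]
    field_simp
  simp_rw [transferMatrix, hintegrand]
  rw [integral_const_mul, integral_sub_right_eq_self (fun w => f (w / α)) u',
    Measure.integral_comp_div f α, abs_of_pos hα, smul_eq_mul, mul_assoc,
    inv_mul_cancel_left₀ hα.ne']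
  rfl

theorem Kcoef_eq (n m : ℕ) :
    Kcoef n m = (√(π * 2 ^ m * m.factorial))⁻¹ * (√(π * 2 ^ n * n.factorial))⁻¹ *
      (π * 2 ^ m * n.factorial) := by
  have rpow_half (k : ℕ) : (2 : ℝ) ^ ((k : ℝ) / 2) = √(2 ^ k) := by
    rw [sqrt_eq_rpow, ← rpow_natCast, ← rpow_mul zero_le_two, div_eq_mul_one_div]
  rw [Kcoef, sub_div, rpow_sub zero_lt_two, rpow_half, rpow_half]
  simp only [sqrt_mul' _ (Nat.cast_nonneg _), sqrt_mul pi_pos.le]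
  field_simp
  rw [sq_sqrt (by positivity), sq_sqrt (Nat.cast_nonneg _), sq_sqrt pi_pos.le]
  ring

theorem transferMatrix_pure_shift_general (α' α u' u : ℝ) (hα' : 0 < α')
    (hαeq : α = α') (b : ℝ) (hb : b = (u - u') / α')
    (n m : ℕ) (hnm : m ≤ n) :
    transferMatrix α' u' α u n m
      = Kcoef n m * (-(2 * b)) ^ (n - m) / ((n - m).factorial : ℝ) := by
  subst hαeq hb
  rw [transferMatrix_eq_gaussianIntegral α u' u hα' n m,
    gaussianIntegral_physHermitePoly_mul_comp, Kcoef_eq, ← Nat.factorial_mul_descFactorial hnm]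
  push_cast
  field_simp
  rw [sq_sqrt pi_pos.le]
  ring

/-- Explicit formula for the transformation matrix, pure shift case
(`α = α'` and `u ≠ u'`). -/
theorem transferMatrix_pure_shift (α' α u' u : ℝ) (hα' : 0 < α') (hα : 0 < α)
    (hαeq : α = α') (hune : u ≠ u') (b : ℝ) (hb : b = (u - u') / α')
    (n m : ℕ) (hnm : m ≤ n) :
    transferMatrix α' u' α u n m
      = Kcoef n m * (-(2 * b)) ^ (n - m) / ((n - m).factorial : ℝ) :=
  transferMatrix_pure_shift_general α' α u' u hα' hαeq b hb n m hnm
end
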